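/- Let k, N be positive integers and p a prime. For any integer n >= N, sum_{i=0}^{φ(p^N)-1} B_{n+i}^{(-k)} ≡ 0 (mod p^N), where φ is Euler's totient function. -/

import Mathlib

/-!
Since `m! S(n, m)` is the `m`-th forward difference of `x ↦ x ^ n` at `0`,
`B_n^{(-k)} = ∑_m ∑_{j ≤ m} (-1)^j C(m, j) (m + 1)^k (-j)^n`, and the totient-length sum becomes
`∑_m ∑_j (-1)^j C(m, j) (m + 1)^k (-j)^n ∑_{i < φ(p^N)} (-j)^i`. Every term is divisible by `p^N`:
if `p ∣ j`, because of the factor `(-j)^n` with `n ≥ N`; if `p ∤ j (j + 1)`, because the geometric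
sum times the unit `-j - 1` is `(-j)^{φ(p^N)} - 1 ≡ 0` by Euler; and if `p ∣ j + 1`, because
`-j ≡ 1 (mod p)` makes the geometric sum of length `p^{N-1} (p - 1)` divisible by `p^{N-1}`, while
`(m + 1) C(m, j) = (j + 1) C(m + 1, j + 1)` supplies the last factor `p`.
-/

/-- Stirling numbers of the second kind. -/
def S2 : ℕ → ℕ → ℕ
  | 0, 0 => 1
  | 0, _ + 1 => 0
  | _ + 1, 0 => 0
  | n + 1, m + 1 => S2 n m + (m + 1) * S2 n (m + 1)
/-- Poly-Bernoulli number with negative upper index: `B_n^{(-k)}`. -/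
def Bneg (n k : ℕ) : ℤ :=
  (-1 : ℤ) ^ n * ∑ m ∈ Finset.range (n + 1),
    (-1 : ℤ) ^ m * (Nat.factorial m : ℤ) * (S2 n m : ℤ) * ((m : ℤ) + 1) ^ k

open Finset Nat fwdDiff

theorem S2_eq_stirlingSecond : ∀ n m, S2 n m = stirlingSecond n m
  | 0, 0 | 0, _ + 1 | _ + 1, 0 => rfl
  | n + 1, m + 1 => by
    rw [S2, stirlingSecond_succ_succ, S2_eq_stirlingSecond n m, S2_eq_stirlingSecond n (m + 1),
      add_comm]

section fwdDiff

variable {R : Type*} [CommRing R]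

theorem fwdDiff_iter_succ_id_mul (g : R → R) (m : ℕ) (y : R) :
    (Δ_[1])^[m + 1] (fun x ↦ x * g x) y =
      y * (Δ_[1])^[m + 1] g y + (m + 1) * (Δ_[1])^[m] g (y + 1) := by
  induction m generalizing y with
  | zero =>
    simp only [zero_add, Function.iterate_one, fwdDiff, cast_zero, Function.iterate_zero, id_eq,
      one_mul]
    ring
  | succ m ih =>
    rw [Function.iterate_succ_apply', fwdDiff, ih, ih]
    simp only [Function.iterate_succ_apply', fwdDiff]
    push_cast
    ring

theorem fwdDiff_iter_pow_eq_factorial_mul_stirlingSecond (n m : ℕ) :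
    (Δ_[1])^[m] (fun r : R ↦ r ^ n) 0 = m ! * stirlingSecond n m := by
  induction n generalizing m with
  | zero =>
    rcases m with _ | m
    · simp
    · rw [fwdDiff_iter_pow_eq_zero_of_lt m.succ_pos]
      simp
  | succ n ih =>
    rcases m with _ | m
    · simp
    · have hshift : (Δ_[1])^[m] (fun r : R ↦ r ^ n) 1
          = (Δ_[1])^[m] (fun r : R ↦ r ^ n) 0 + (Δ_[1])^[m + 1] (fun r : R ↦ r ^ n) 0 := by
        rw [Function.iterate_succ_apply', fwdDiff, zero_add, add_sub_cancel]
      simp only [_root_.pow_succ']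
      rw [fwdDiff_iter_succ_id_mul, zero_mul, zero_add, zero_add, hshift, ih, ih,
        stirlingSecond_succ_succ, factorial_succ]
      push_cast
      ring

end fwdDiff

theorem sum_neg_one_pow_mul_choose_mul_pow (n m : ℕ) :
    ∑ j ∈ range (m + 1), (-1) ^ j * m.choose j * (j : ℤ) ^ n =
      (-1) ^ m * m ! * stirlingSecond n m := by
  rw [mul_assoc, ← fwdDiff_iter_pow_eq_factorial_mul_stirlingSecond, fwdDiff_iter_eq_sum_shift,
    mul_sum]
  refine sum_congr rfl fun j hj ↦ ?_
  obtain ⟨d, rfl⟩ := Nat.exists_eq_add_of_le (mem_range_succ_iff.1 hj)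
  have hsq : ((-1 : ℤ) ^ d) ^ 2 = 1 := by rw [← pow_mul, mul_comm, pow_mul, neg_one_sq, one_pow]
  simp only [Nat.add_sub_cancel_left, zsmul_eq_mul, nsmul_eq_mul, zero_add, mul_one, pow_add]
  push_cast
  linear_combination -(-1 : ℤ) ^ j * (j + d).choose j * (j : ℤ) ^ n * hsq

theorem Bneg_eq_sum {n M : ℕ} (k : ℕ) (hM : n ≤ M) :
    Bneg n k = ∑ m ∈ range (M + 1), ∑ j ∈ range (m + 1),
      (-1) ^ j * m.choose j * ((m : ℤ) + 1) ^ k * (-(j : ℤ)) ^ n := by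
  rw [Bneg, mul_sum, sum_subset (range_subset_range.2 (by omega : n + 1 ≤ M + 1))]
  · refine sum_congr rfl fun m _ ↦ ?_
    rw [S2_eq_stirlingSecond, ← sum_neg_one_pow_mul_choose_mul_pow, sum_mul, mul_sum]
    refine sum_congr rfl fun j _ ↦ ?_
    rw [neg_pow]
    ring
  · intro m _ hm
    rw [S2_eq_stirlingSecond, stirlingSecond_eq_zero_of_lt (by simp only [mem_range] at hm; omega)]
    simp

theorem geom_sum_range_mul {R : Type*} [Semiring R] (x : R) (a b : ℕ) :
    ∑ i ∈ range (a * b), x ^ i = (∑ i ∈ range a, x ^ i) * ∑ r ∈ range b, (x ^ a) ^ r := by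
  induction b with
  | zero => simp
  | succ b ih =>
    rw [Nat.mul_succ, sum_range_add, ih, sum_range_succ _ b, mul_add, ← pow_mul]
    congr 1
    rw [sum_mul]
    exact sum_congr rfl fun s _ ↦ by rw [add_comm, pow_add]

theorem pow_dvd_geom_sum_of_dvd_sub_one {R : Type*} [CommRing R] {p : ℕ} {x : R}
    (h : (p : R) ∣ x - 1) (a b : ℕ) : (p : R) ^ a ∣ ∑ i ∈ range (p ^ a * b), x ^ i := by
  rw [geom_sum_range_mul]
  refine dvd_mul_of_dvd_left ?_ _
  induction a with
  | zero => simp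
  | succ a ih =>
    have hy : (p : R) ∣ x ^ p ^ a - 1 := h.trans (by simpa using sub_dvd_pow_sub_pow x 1 (p ^ a))
    rw [Nat.pow_succ, geom_sum_range_mul, _root_.pow_succ]
    exact mul_dvd_mul ih (by simpa using dvd_geom_sum₂_self hy)

theorem Int.ModEq.pow_totient {x : ℤ} {q : ℕ} (h : IsCoprime x q) : x ^ φ q ≡ 1 [ZMOD q] := by
  rw [← ZMod.intCast_eq_intCast_iff]
  have := congrArg Units.val (ZMod.pow_totient (ZMod.unitOfIsCoprime x h))
  rw [Units.val_pow_eq_pow_val, ZMod.coe_unitOfIsCoprime, Units.val_one] at this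
  exact_mod_cast this

theorem dvd_geom_sum_totient_of_isCoprime {q : ℕ} {x : ℤ} (hx : IsCoprime x q)
    (hx1 : IsCoprime (x - 1) q) : (q : ℤ) ∣ ∑ i ∈ range (φ q), x ^ i :=
  hx1.symm.dvd_of_dvd_mul_right (by rw [geom_sum_mul]; exact (Int.ModEq.pow_totient hx).symm.dvd)

theorem dvd_succ_pow_mul_choose {d m j k : ℕ} (hd : d ∣ j + 1) (hk : k ≠ 0) :
    d ∣ (m + 1) ^ k * m.choose j :=
  (hd.trans (Dvd.intro_left _ (add_one_mul_choose_eq m j).symm)).trans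
    (mul_dvd_mul_right (dvd_pow_self _ hk) _)

theorem prime_pow_dvd_choose_mul_geom_sum_totient {p N n k m j : ℕ} (hp : p.Prime) (hN : 0 < N)
    (hk : k ≠ 0) (hn : N ≤ n) :
    (p : ℤ) ^ N ∣ ((m : ℤ) + 1) ^ k * m.choose j *
      ((-(j : ℤ)) ^ n * ∑ i ∈ range (φ (p ^ N)), (-(j : ℤ)) ^ i) := by
  have hpZ : Prime (p : ℤ) := Nat.prime_iff_prime_int.mp hp
  have hsub : -(j : ℤ) - 1 = -(j + 1 : ℕ) := by push_cast; ring
  by_cases hj : (p : ℤ) ∣ j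
  · exact dvd_mul_of_dvd_right
      (dvd_mul_of_dvd_left ((pow_dvd_pow _ hn).trans (pow_dvd_pow_of_dvd hj.neg_right n)) _) _
  by_cases hj1 : p ∣ j + 1
  · have hchoose : (p : ℤ) ∣ ((m : ℤ) + 1) ^ k * m.choose j := by
      exact_mod_cast dvd_succ_pow_mul_choose hj1 hk
    have hgeom : (p : ℤ) ^ (N - 1) ∣ ∑ i ∈ range (φ (p ^ N)), (-(j : ℤ)) ^ i := by
      rw [totient_prime_pow hp hN]
      refine pow_dvd_geom_sum_of_dvd_sub_one ?_ _ _
      rw [hsub]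
      exact (Int.natCast_dvd_natCast.2 hj1).neg_right
    have hpow : (p : ℤ) ^ N = p * p ^ (N - 1) := by
      rw [← _root_.pow_succ', Nat.sub_add_cancel hN]
    rw [hpow]
    exact mul_dvd_mul hchoose (dvd_mul_of_dvd_right hgeom _)
  · have hx : IsCoprime (-(j : ℤ)) ((p ^ N : ℕ) : ℤ) := by
      push_cast
      exact (hpZ.coprime_iff_not_dvd.2 (dvd_neg.not.2 hj)).symm.pow_right
    have hx1 : IsCoprime (-(j : ℤ) - 1) ((p ^ N : ℕ) : ℤ) := by
      rw [hsub, Nat.cast_pow]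
      exact (hpZ.coprime_iff_not_dvd.2 (dvd_neg.not.2 (by exact_mod_cast hj1))).symm.pow_right
    exact dvd_mul_of_dvd_right
      (dvd_mul_of_dvd_right (by exact_mod_cast dvd_geom_sum_totient_of_isCoprime hx hx1) _) _

/-- Vanishing of totient-length sums of poly-Bernoulli numbers with negative
upper index. -/
theorem polyBernoulli_neg_sum_vanish (k N : ℕ) (hk : 0 < k) (hN : 0 < N)
    (p : ℕ) (hp : p.Prime) (n : ℕ) (hn : N ≤ n) :
    (∑ i ∈ Finset.range (Nat.totient (p ^ N)), Bneg (n + i) k) ≡ 0 [ZMOD (p : ℤ) ^ N] := by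
  rw [Int.modEq_zero_iff_dvd]
  have hB : ∀ i ∈ range (φ (p ^ N)), Bneg (n + i) k =
      ∑ m ∈ range (n + φ (p ^ N) + 1), ∑ j ∈ range (m + 1),
        (-1) ^ j * m.choose j * ((m : ℤ) + 1) ^ k * (-(j : ℤ)) ^ (n + i) :=
    fun i hi ↦ Bneg_eq_sum k (by simp only [mem_range] at hi; omega)
  rw [sum_congr rfl hB, sum_comm]
  refine dvd_sum fun m _ ↦ ?_
  rw [sum_comm]
  refine dvd_sum fun j _ ↦ ?_
  have hfactor : ∑ i ∈ range (φ (p ^ N)),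
      (-1) ^ j * m.choose j * ((m : ℤ) + 1) ^ k * (-(j : ℤ)) ^ (n + i) =
      (-1) ^ j * (((m : ℤ) + 1) ^ k * m.choose j *
        ((-(j : ℤ)) ^ n * ∑ i ∈ range (φ (p ^ N)), (-(j : ℤ)) ^ i)) := by
    simp only [mul_sum]
    exact sum_congr rfl fun i _ ↦ by ring
  rw [hfactor]
  exact dvd_mul_of_dvd_right (prime_pow_dvd_choose_mul_geom_sum_totient hp hN hk.ne' hn) _
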